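/- Let n ∈ ℝ³ with ‖n‖ = 1 and 0 < α < 1, and set q = αn. Then for every x ∈ S²: ⟨n, φ_q(x)⟩ > α if and only if ⟨n, x⟩ > −α; ⟨n, φ_q(x)⟩ = α if and only if ⟨n, x⟩ = −α; and ⟨n, φ_q(x)⟩ < α if and only if ⟨n, x⟩ < −α. That is, φ_q contracts the spherical cap {x ∈ S² : ⟨n,x⟩ > −α} onto the cap {x ∈ S² : ⟨n,x⟩ > α}, expands the complementary cap {⟨n,x⟩ < −α} onto {⟨n,x⟩ < α}, and maps the critical circle ⟨n,x⟩ = −α onto the circle ⟨n,x⟩ = α. -/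

import Mathlib

noncomputable def phiMap (q p : EuclideanSpace ℝ (Fin 3)) : EuclideanSpace ℝ (Fin 3) :=
  (1 + ‖q‖ ^ 2 + 2 * (inner ℝ q p : ℝ))⁻¹ •
    ((1 - ‖q‖ ^ 2) • p + (2 * (1 + (inner ℝ q p : ℝ))) • q)

/-!
With `q = α • n`, a direct computation gives
`⟪n, φ_q x⟫ - α = (1 - α²) / (1 + α² + 2α⟪n, x⟫) * (⟪n, x⟫ + α)`, and on the sphere the
denominator is `‖q + x‖² > 0`, so the two sides of each comparison have the same sign. The images
are the full caps because `φ_q` maps the sphere to itself with right inverse `φ_{-q}`.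
-/

open RealInnerProductSpace

theorem Set.image_setOf_and_eq_of_rightInvOn {α β : Type*} {f : α → β} {g : β → α}
    {S P : α → Prop} {T Q : β → Prop} (hf : ∀ x, S x → T (f x)) (hg : ∀ y, T y → S (g y))
    (hfg : ∀ y, T y → f (g y) = y) (hQP : ∀ x, S x → (Q (f x) ↔ P x)) :
    f '' {x | S x ∧ P x} = {y | T y ∧ Q y} := by
  ext y
  constructor
  · rintro ⟨x, ⟨hSx, hPx⟩, rfl⟩
    exact ⟨hf x hSx, (hQP x hSx).2 hPx⟩
  · rintro ⟨hTy, hQy⟩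
    refine ⟨g y, ⟨hg y hTy, (hQP _ (hg y hTy)).1 ?_⟩, hfg y hTy⟩
    rwa [hfg y hTy]

theorem lt_iff_lt_and_eq_iff_eq_and_lt_iff_lt_of_sub_eq_mul {R : Type*} [Ring R] [LinearOrder R]
    [IsStrictOrderedRing R] {a b c α β : R} (hc : 0 < c)
    (h : a - α = c * (b - β)) : (α < a ↔ β < b) ∧ (a = α ↔ b = β) ∧ (a < α ↔ b < β) := by
  refine ⟨?_, ?_, ?_⟩
  · rw [← sub_pos, h, mul_pos_iff_of_pos_left hc, sub_pos]
  · rw [← sub_eq_zero, h, mul_eq_zero, or_iff_right hc.ne', sub_eq_zero]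
  · rw [← sub_neg, h, ← smul_eq_mul, smul_neg_iff_of_pos_left hc, sub_neg]

section

variable {q p : EuclideanSpace ℝ (Fin 3)}

theorem phiMap_denom_eq_norm_add_sq (hp : ‖p‖ = 1) :
    1 + ‖q‖ ^ 2 + 2 * ⟪q, p⟫ = ‖q + p‖ ^ 2 := by
  rw [norm_add_sq_real, hp]
  ring

theorem phiMap_denom_pos (hq : ‖q‖ ≠ 1) (hp : ‖p‖ = 1) : 0 < 1 + ‖q‖ ^ 2 + 2 * ⟪q, p⟫ := by
  rw [phiMap_denom_eq_norm_add_sq hp]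
  refine pow_pos (norm_pos_iff.2 fun h => hq ?_) 2
  rw [eq_neg_of_add_eq_zero_left h, norm_neg, hp]

theorem norm_phiMap (hq : ‖q‖ ≠ 1) (hp : ‖p‖ = 1) : ‖phiMap q p‖ = 1 := by
  have hD := phiMap_denom_pos hq hp
  have hnum : ‖(1 - ‖q‖ ^ 2) • p + (2 * (1 + ⟪q, p⟫)) • q‖ ^ 2 =
      (1 + ‖q‖ ^ 2 + 2 * ⟪q, p⟫) ^ 2 := by
    rw [norm_add_sq_real, norm_smul, norm_smul, real_inner_smul_left, real_inner_smul_right,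
      real_inner_comm, Real.norm_eq_abs, Real.norm_eq_abs, mul_pow, mul_pow, sq_abs, sq_abs, hp]
    ring
  rw [phiMap, norm_smul, (sq_eq_sq₀ (norm_nonneg _) hD.le).1 hnum, norm_inv,
    Real.norm_of_nonneg hD.le, inv_mul_cancel₀ hD.ne']

theorem phiMap_phiMap_neg (hq : ‖q‖ ≠ 1) (hp : ‖p‖ = 1) : phiMap q (phiMap (-q) p) = p := by
  set s : ℝ := ⟪q, p⟫ with hs
  have hQ : 1 - ‖q‖ ^ 2 ≠ 0 := by
    rwa [sub_ne_zero, ne_comm, Ne, pow_eq_one_iff_of_nonneg (norm_nonneg q) two_ne_zero]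
  have hE : 1 + ‖q‖ ^ 2 - 2 * s ≠ 0 := by
    have := phiMap_denom_pos (q := -q) (by rwa [norm_neg]) hp
    rw [norm_neg, inner_neg_left] at this
    linarith
  have hx : phiMap (-q) p = (1 + ‖q‖ ^ 2 - 2 * s)⁻¹ • ((1 - ‖q‖ ^ 2) • p - (2 * (1 - s)) • q) := by
    rw [phiMap]
    simp only [norm_neg, inner_neg_left, ← hs]
    match_scalars <;> ring
  have hqx : ⟪q, phiMap (-q) p⟫ =
      (1 + ‖q‖ ^ 2 - 2 * s)⁻¹ * ((1 - ‖q‖ ^ 2) * s - 2 * (1 - s) * ‖q‖ ^ 2) := by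
    rw [hx]
    simp only [inner_smul_right, inner_sub_right, real_inner_self_eq_norm_sq, ← hs]
  have hD : 1 + ‖q‖ ^ 2 + 2 * ⟪q, phiMap (-q) p⟫ =
      (1 + ‖q‖ ^ 2 - 2 * s)⁻¹ * (1 - ‖q‖ ^ 2) ^ 2 := by
    rw [hqx]; field_simp; ring
  rw [phiMap, hD, hqx, hx]
  match_scalars
  · field_simp
  · field_simp
    ring

end

theorem inner_phiMap_smul_sub {n x : EuclideanSpace ℝ (Fin 3)} (hn : ‖n‖ = 1) (α : ℝ)
    (hD : 1 + α ^ 2 + 2 * α * ⟪n, x⟫ ≠ 0) :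
    ⟪n, phiMap (α • n) x⟫ - α = (1 - α ^ 2) / (1 + α ^ 2 + 2 * α * ⟪n, x⟫) * (⟪n, x⟫ + α) := by
  simp only [phiMap, inner_smul_right, inner_add_right, real_inner_smul_left, norm_smul,
    real_inner_self_eq_norm_sq, hn, Real.norm_eq_abs, sq_abs, one_pow, mul_one, ← mul_assoc]
  rw [inv_mul_eq_div, div_mul_eq_mul_div, div_sub' hD, div_left_inj' hD]
  ring

theorem norm_smul_unit_ne_one {E : Type*} [SeminormedAddCommGroup E] [NormedSpace ℝ E] {n : E}
    (hn : ‖n‖ = 1) {α : ℝ} (hα0 : 0 < α) (hα1 : α < 1) : ‖α • n‖ ≠ 1 := by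
  rw [norm_smul, hn, mul_one, Real.norm_of_nonneg hα0.le]
  exact hα1.ne

theorem inner_phiMap_smul_caps_iff {n x : EuclideanSpace ℝ (Fin 3)} (hn : ‖n‖ = 1) {α : ℝ}
    (hα0 : 0 < α) (hα1 : α < 1) (hx : ‖x‖ = 1) :
    (α < ⟪n, phiMap (α • n) x⟫ ↔ -α < ⟪n, x⟫) ∧ (⟪n, phiMap (α • n) x⟫ = α ↔ ⟪n, x⟫ = -α) ∧
      (⟪n, phiMap (α • n) x⟫ < α ↔ ⟪n, x⟫ < -α) := by
  have hD : 0 < 1 + α ^ 2 + 2 * α * ⟪n, x⟫ := by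
    simpa only [norm_smul, hn, mul_one, Real.norm_eq_abs, sq_abs, real_inner_smul_left,
      ← mul_assoc] using phiMap_denom_pos (norm_smul_unit_ne_one hn hα0 hα1) hx
  have hc : 0 < (1 - α ^ 2) / (1 + α ^ 2 + 2 * α * ⟪n, x⟫) := div_pos (by nlinarith) hD
  refine lt_iff_lt_and_eq_iff_eq_and_lt_iff_lt_of_sub_eq_mul hc ?_
  rw [inner_phiMap_smul_sub hn α hD.ne', sub_neg_eq_add]

theorem phi_contracts_caps (n : EuclideanSpace ℝ (Fin 3)) (hn : ‖n‖ = 1)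
    (α : ℝ) (hα0 : 0 < α) (hα1 : α < 1) :
    (∀ x : EuclideanSpace ℝ (Fin 3), ‖x‖ = 1 →
      ((α < (inner ℝ n (phiMap (α • n) x) : ℝ) ↔ -α < (inner ℝ n x : ℝ)) ∧
       ((inner ℝ n (phiMap (α • n) x) : ℝ) = α ↔ (inner ℝ n x : ℝ) = -α) ∧
       ((inner ℝ n (phiMap (α • n) x) : ℝ) < α ↔ (inner ℝ n x : ℝ) < -α))) ∧
    phiMap (α • n) '' {x : EuclideanSpace ℝ (Fin 3) | ‖x‖ = 1 ∧ -α < (inner ℝ n x : ℝ)} =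
      {x : EuclideanSpace ℝ (Fin 3) | ‖x‖ = 1 ∧ α < (inner ℝ n x : ℝ)} ∧
    phiMap (α • n) '' {x : EuclideanSpace ℝ (Fin 3) | ‖x‖ = 1 ∧ (inner ℝ n x : ℝ) < -α} =
      {x : EuclideanSpace ℝ (Fin 3) | ‖x‖ = 1 ∧ (inner ℝ n x : ℝ) < α} ∧
    phiMap (α • n) '' {x : EuclideanSpace ℝ (Fin 3) | ‖x‖ = 1 ∧ (inner ℝ n x : ℝ) = -α} =
      {x : EuclideanSpace ℝ (Fin 3) | ‖x‖ = 1 ∧ (inner ℝ n x : ℝ) = α} := by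
  have hq := norm_smul_unit_ne_one hn hα0 hα1
  have hcaps := fun x (hx : ‖x‖ = 1) => inner_phiMap_smul_caps_iff hn hα0 hα1 hx
  refine ⟨hcaps, ?_, ?_, ?_⟩ <;>
    refine Set.image_setOf_and_eq_of_rightInvOn (fun _ => norm_phiMap hq)
      (fun _ => norm_phiMap (by rwa [norm_neg])) (fun _ => phiMap_phiMap_neg hq) fun x hx => ?_
  exacts [(hcaps x hx).1, (hcaps x hx).2.2, (hcaps x hx).2.1]
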